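/- Under the hypotheses: $\tau,\sigma\in\mathbb{N}\cup\{0\}$ with $\tau>\sigma$; $f:\mathbb{R}\to\mathbb{R}$ locally Lipschitz and bounded by $P$; there exist $C\in(0,1)$ and an increasing sequence $(w_k)\subset(0,1)$ with $\sum_{k=1}^{\infty}(1-w_k)<\infty$ such that $\sum_{s=k}^{\infty}|1/r_s|\sum_{t=s}^{\infty}(|a_t|P+|b_t|)=O((1-w_k)(Cw_k)^k)$; and $q_n\in(0,1)$ with $\lim_n q_n=1$ and $\inf_n q_n>0$. Then the equation $\Delta(r_n\Delta(x_n+q_nx_{n-\tau}))=a_nf(x_{n-\sigma})+b_n$ has a bounded solution $x:\mathbb{N}_{\tau}\to\mathbb{R}$ satisfying the equation for every $n\ge\tau$. -/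

import Mathlib

/-!
Summing the forcing `g n = a n * f (x (n - σ)) + b n` twice from the right gives
`z = doubleTail r g` with `Δ(r Δz) = g`, so it suffices to solve `x n + q n * x (n - τ) = z n`
for large `n`. As `q n` may approach `1`, the map `x ↦ z - q x(· - τ)` is not a contraction;
instead the neutral relation is inverted by forward recursion (`neutralInv`), which costs at most
the tail `∑_{m ≥ N} |z m|`. The hypothesis `O((1 - w k)(C w k)^k)` makes the double tails
summable, so for `N` large the map `x ↦ neutralInv (doubleTail r (g x))` sends sequences into the
unit ball and, `f` being Lipschitz there (after clamping its argument to `[-1, 1]`), is a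
contraction of the bounded sequences. Its fixed point solves the equation for `n ≥ N`. The
equation at `n` is affine in `x (n - τ)`, with coefficient `r n * q n ≠ 0`, and involves no
earlier index, so the solution extends backwards one index at a time down to `n = τ`.
-/

open Filter

noncomputable section

def tailSum (u : ℕ → ℝ) (n : ℕ) : ℝ := ∑' t, u (n + t)

lemma Summable.nat_add_left {u : ℕ → ℝ} (hu : Summable u) (n : ℕ) :
    Summable fun t => u (n + t) := by
  simpa only [add_comm] using (summable_nat_add_iff n).mpr hu

lemma tendsto_tailSum (u : ℕ → ℝ) : Tendsto (tailSum u) atTop (nhds 0) := by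
  refine (tendsto_sum_nat_add u).congr fun n => tsum_congr fun t => ?_
  rw [add_comm]

lemma tailSum_sub_tailSum_succ {u : ℕ → ℝ} (hu : Summable u) (n : ℕ) :
    tailSum u n - tailSum u (n + 1) = u n := by
  rw [tailSum, (hu.nat_add_left n).tsum_eq_zero_add]
  simp only [add_zero, tailSum, add_sub_cancel_right, add_right_comm n 1, add_assoc]

lemma tailSum_sub {u v : ℕ → ℝ} (hu : Summable u) (hv : Summable v) (n : ℕ) :
    tailSum (u - v) n = tailSum u n - tailSum v n :=
  (hu.nat_add_left n).tsum_sub (hv.nat_add_left n)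

lemma abs_tailSum_le {u U : ℕ → ℝ} {c : ℝ} (hU : Summable U) (h : ∀ t, |u t| ≤ c * U t)
    (n : ℕ) : |tailSum u n| ≤ c * tailSum U n :=
  calc |tailSum u n| ≤ ∑' t, c * U (n + t) :=
        tsum_of_norm_bounded (f := fun t => u (n + t)) ((hU.nat_add_left n).mul_left c).hasSum
          fun t => h (n + t)
    _ = c * tailSum U n := tsum_mul_left

def doubleTail (r h : ℕ → ℝ) : ℕ → ℝ := tailSum fun s => 1 / r s * tailSum h s

lemma doubleTail_solves {r h : ℕ → ℝ} (hr : ∀ n, r n ≠ 0) (hh : Summable h)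
    (hrh : Summable fun s => 1 / r s * tailSum h s) (n : ℕ) :
    r (n + 1) * (doubleTail r h (n + 2) - doubleTail r h (n + 1)) -
      r n * (doubleTail r h (n + 1) - doubleTail r h n) = h n := by
  have step : ∀ k, r k * (doubleTail r h (k + 1) - doubleTail r h k) = -tailSum h k := by
    intro k
    rw [doubleTail, ← neg_sub, tailSum_sub_tailSum_succ hrh k]
    field_simp [hr k]
  rw [step (n + 1), step n, ← tailSum_sub_tailSum_succ hh n]
  ring

lemma doubleTail_sub {r h₁ h₂ : ℕ → ℝ} (hh₁ : Summable h₁) (hh₂ : Summable h₂)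
    (hrh₁ : Summable fun s => 1 / r s * tailSum h₁ s)
    (hrh₂ : Summable fun s => 1 / r s * tailSum h₂ s) (m : ℕ) :
    doubleTail r (h₁ - h₂) m = doubleTail r h₁ m - doubleTail r h₂ m := by
  rw [doubleTail, doubleTail, doubleTail, ← tailSum_sub hrh₁ hrh₂]
  congr 1
  funext s
  rw [tailSum_sub hh₁ hh₂, Pi.sub_apply, mul_sub]

section Majorant

variable {r h H : ℕ → ℝ} {c : ℝ}

lemma abs_inv_mul_tailSum_le (hH : Summable H) (hh : ∀ t, |h t| ≤ c * H t) (s : ℕ) :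
    |1 / r s * tailSum h s| ≤ c * (|1 / r s| * tailSum H s) := by
  rw [abs_mul, mul_left_comm]
  exact mul_le_mul_of_nonneg_left (abs_tailSum_le hH hh s) (abs_nonneg _)

lemma summable_inv_mul_tailSum (hH : Summable H)
    (hrH : Summable fun s => |1 / r s| * tailSum H s) (hh : ∀ t, |h t| ≤ c * H t) :
    Summable fun s => 1 / r s * tailSum h s :=
  (hrH.mul_left c).of_norm_bounded (abs_inv_mul_tailSum_le hH hh)

lemma abs_doubleTail_le (hH : Summable H) (hrH : Summable fun s => |1 / r s| * tailSum H s)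
    (hh : ∀ t, |h t| ≤ c * H t) (m : ℕ) :
    |doubleTail r h m| ≤ c * tailSum (fun s => |1 / r s| * tailSum H s) m :=
  abs_tailSum_le hrH (abs_inv_mul_tailSum_le hH hh) m

end Majorant

def neutralInv (q z : ℕ → ℝ) (τ N n : ℕ) : ℝ :=
  if 0 < τ ∧ τ ≤ n ∧ N ≤ n then z n - q n * neutralInv q z τ N (n - τ) else 0
termination_by n
decreasing_by omega

section NeutralInv

variable {q z z' : ℕ → ℝ} {τ N : ℕ}

lemma neutralInv_add (hτ : 0 < τ) (hτN : τ ≤ N) {n : ℕ} (hn : N ≤ n) :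
    neutralInv q z τ N n + q n * neutralInv q z τ N (n - τ) = z n := by
  rw [neutralInv, if_pos ⟨hτ, hτN.trans hn, hn⟩]
  ring

lemma neutralInv_sub (n : ℕ) :
    neutralInv q (z - z') τ N n = neutralInv q z τ N n - neutralInv q z' τ N n := by
  induction n using Nat.strong_induction_on with
  | _ n ih =>
    rw [neutralInv.eq_1 q (z - z'), neutralInv.eq_1 q z, neutralInv.eq_1 q z']
    split_ifs with h
    · rw [ih (n - τ) (by omega), Pi.sub_apply]
      ring
    · ring

lemma abs_neutralInv_le (hq : ∀ n, |q n| ≤ 1) {B : ℕ → ℝ} (hB : Summable B)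
    (hB0 : ∀ m, 0 ≤ B m) (hz : ∀ m ≥ N, |z m| ≤ B m) (n : ℕ) :
    |neutralInv q z τ N n| ≤ tailSum B N := by
  have partial_sum : |neutralInv q z τ N n| ≤ ∑ m ∈ Finset.Ico N (n + 1), B m := by
    induction n using Nat.strong_induction_on with
    | _ n ih =>
      rw [neutralInv.eq_1]
      split_ifs with h
      · obtain ⟨hτ, hτn, hNn⟩ := h
        calc |z n - q n * neutralInv q z τ N (n - τ)|
            ≤ |z n| + |q n| * |neutralInv q z τ N (n - τ)| := by
              rw [← abs_mul]; exact abs_sub _ _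
          _ ≤ B n + 1 * ∑ m ∈ Finset.Ico N (n - τ + 1), B m := by
              gcongr
              · exact hz n hNn
              · exact hq n
              · exact ih _ (by omega)
          _ ≤ B n + ∑ m ∈ Finset.Ico N n, B m := by
              rw [one_mul]
              exact add_le_add le_rfl (Finset.sum_le_sum_of_subset_of_nonneg
                (Finset.Ico_subset_Ico_right (by omega)) fun m _ _ => hB0 m)
          _ = ∑ m ∈ Finset.Ico N (n + 1), B m := by
              rw [Finset.sum_Ico_succ_top hNn, add_comm]
      · simpa using Finset.sum_nonneg fun m _ => hB0 m
  calc |neutralInv q z τ N n| ≤ ∑ m ∈ Finset.Ico N (n + 1), B m := partial_sum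
    _ = ∑ k ∈ Finset.range (n + 1 - N), B (N + k) := Finset.sum_Ico_eq_sum_range _ _ _
    _ ≤ tailSum B N := (hB.nat_add_left N).sum_le_tsum _ fun k _ => hB0 (N + k)

end NeutralInv

lemma exists_fixedPoint_of_abs_le {Φ : (ℕ → ℝ) → ℕ → ℝ} {R : ℝ} {K : NNReal} (hK : K < 1)
    (hΦ : ∀ x n, |Φ x n| ≤ R)
    (hcontr : ∀ x y δ, (∀ i, |x i - y i| ≤ δ) → ∀ n, |Φ x n - Φ y n| ≤ K * δ) :
    ∃ x, Φ x = x := by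
  let T : BoundedContinuousFunction ℕ ℝ → BoundedContinuousFunction ℕ ℝ := fun x =>
    .ofNormedAddCommGroupDiscrete (Φ x) R (hΦ x)
  have hT : ContractingWith K T := by
    refine ⟨hK, LipschitzWith.of_dist_le_mul fun x y => ?_⟩
    rw [BoundedContinuousFunction.dist_le (mul_nonneg K.coe_nonneg dist_nonneg)]
    intro n
    rw [Real.dist_eq]
    refine hcontr x y _ (fun i => ?_) n
    simpa only [Real.dist_eq] using BoundedContinuousFunction.dist_coe_le_dist (f := x) (g := y) i
  exact ⟨_, congrArg DFunLike.coe hT.fixedPoint_isFixedPt⟩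

lemma exists_forall_abs_le_of_ge {y : ℕ → ℝ} {N : ℕ} {B : ℝ} (h : ∀ n ≥ N, |y n| ≤ B) :
    ∃ M, ∀ n, |y n| ≤ M := by
  refine ⟨max B (∑ i ∈ Finset.range N, |y i|), fun n => ?_⟩
  by_cases hn : N ≤ n
  · exact le_max_of_le_left (h n hn)
  · exact le_max_of_le_right (Finset.single_le_sum (fun i _ => abs_nonneg (y i))
      (Finset.mem_range.2 (not_le.1 hn)))

lemma LocallyLipschitz.exists_lipschitzWith_IccExtend {β : Type*} [PseudoMetricSpace β]
    {f : ℝ → β} (hf : LocallyLipschitz f) {a b : ℝ} (hab : a ≤ b) :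
    ∃ K, LipschitzWith K (Set.IccExtend hab ((Set.Icc a b).domRestrict f)) := by
  obtain ⟨K, hK⟩ := (hf.locallyLipschitzOn (s := Set.Icc a b)).exists_lipschitzOnWith_of_compact
    isCompact_Icc
  exact ⟨K * 1, (lipschitzOnWith_iff_restrict.mp hK).comp (LipschitzWith.projIcc hab)⟩

/-- The hypotheses control `a` only through `|a t| * P`, so a Lipschitz constant is needed in
units of `P`; when `P = 0` the function vanishes. -/
lemma LipschitzWith.exists_abs_sub_le_mul_bound {g : ℝ → ℝ} {K : NNReal} {P : ℝ}
    (hg : LipschitzWith K g) (hgP : ∀ u, |g u| ≤ P) :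
    ∃ L ≥ 0, ∀ u v, |g u - g v| ≤ L * P * |u - v| := by
  rcases ((abs_nonneg (g 0)).trans (hgP 0)).eq_or_lt with hP | hP
  · have hg0 : ∀ u, g u = 0 := fun u => abs_nonpos_iff.mp (hP ▸ hgP u)
    exact ⟨0, le_rfl, fun u v => by simp [hg0]⟩
  · refine ⟨K / P, by positivity, fun u v => ?_⟩
    rw [div_mul_cancel₀ _ hP.ne', ← Real.dist_eq, ← Real.dist_eq]
    exact hg.dist_le_mul u v

lemma summable_of_le_mul_pow {W w : ℕ → ℝ} {C D : ℝ} {k₀ : ℕ} (hC : C ∈ Set.Ioo (0 : ℝ) 1)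
    (hw : ∀ k, w k ∈ Set.Ioo (0 : ℝ) 1) (hD : 0 ≤ D) (hW0 : ∀ k, 0 ≤ W k)
    (hW : ∀ k ≥ k₀, W k ≤ D * (1 - w k) * (C * w k) ^ k) : Summable W := by
  refine Summable.of_norm_bounded_eventually_nat
    ((summable_geometric_of_lt_one hC.1.le hC.2).mul_left D) ?_
  filter_upwards [eventually_ge_atTop k₀] with k hk
  obtain ⟨hw0, hw1⟩ := hw k
  rw [Real.norm_eq_abs, abs_of_nonneg (hW0 k)]
  calc W k ≤ D * (1 - w k) * (C * w k) ^ k := hW k hk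
    _ ≤ D * 1 * C ^ k := by
        have hCw : 0 ≤ C * w k := mul_nonneg hC.1.le hw0.le
        gcongr
        · linarith
        · exact mul_le_of_le_one_right hC.1.le hw1.le
    _ = D * C ^ k := by ring

def forcing (a b : ℕ → ℝ) (f : ℝ → ℝ) (σ : ℕ) (x : ℕ → ℝ) (n : ℕ) : ℝ :=
  a n * f (x (n - σ)) + b n

def neutralSum (q : ℕ → ℝ) (τ : ℕ) (x : ℕ → ℝ) (n : ℕ) : ℝ :=
  x n + q n * x (n - τ)

def SolvesAt (r a b q : ℕ → ℝ) (f : ℝ → ℝ) (τ σ : ℕ) (x : ℕ → ℝ) (n : ℕ) : Prop :=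
  r (n + 1) * (neutralSum q τ x (n + 2) - neutralSum q τ x (n + 1)) -
    r n * (neutralSum q τ x (n + 1) - neutralSum q τ x n) = forcing a b f σ x n

section Equation

variable {r a b q : ℕ → ℝ} {f : ℝ → ℝ} {τ σ : ℕ} {P L : ℝ}

lemma abs_forcing_le (hfP : ∀ u, |f u| ≤ P) (x : ℕ → ℝ) (t : ℕ) :
    |forcing a b f σ x t| ≤ |a t| * P + |b t| := by
  rw [forcing]
  refine (abs_add_le _ _).trans ?_
  rw [abs_mul]
  gcongr
  exact hfP _

lemma abs_forcing_sub_le (hP : 0 ≤ P) (hL : 0 ≤ L)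
    (hfL : ∀ u v, |f u - f v| ≤ L * P * |u - v|) {x y : ℕ → ℝ} {δ : ℝ}
    (hxy : ∀ i, |x i - y i| ≤ δ) (t : ℕ) :
    |(forcing a b f σ x - forcing a b f σ y) t| ≤ L * δ * (|a t| * P + |b t|) := by
  have hδ : 0 ≤ δ := (abs_nonneg _).trans (hxy 0)
  have hbt : 0 ≤ L * δ * |b t| := by positivity
  calc |(forcing a b f σ x - forcing a b f σ y) t|
      = |a t| * |f (x (t - σ)) - f (y (t - σ))| := by
        rw [Pi.sub_apply, forcing, forcing, ← abs_mul]
        ring_nf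
    _ ≤ |a t| * (L * P * δ) := by
        gcongr
        exact (hfL _ _).trans (by gcongr; exact hxy _)
    _ ≤ L * δ * (|a t| * P + |b t|) := by nlinarith

lemma summable_forcing (hfP : ∀ u, |f u| ≤ P) (hH : Summable fun t => |a t| * P + |b t|)
    (x : ℕ → ℝ) : Summable (forcing a b f σ x) :=
  hH.of_norm_bounded (abs_forcing_le hfP x)

lemma summable_inv_mul_tailSum_forcing (hfP : ∀ u, |f u| ≤ P)
    (hH : Summable fun t => |a t| * P + |b t|)
    (hs : Summable fun s => |1 / r s| * tailSum (fun t => |a t| * P + |b t|) s) (x : ℕ → ℝ) :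
    Summable fun s => 1 / r s * tailSum (forcing a b f σ x) s :=
  summable_inv_mul_tailSum hH hs fun t => (abs_forcing_le hfP x t).trans_eq (one_mul _).symm

lemma abs_doubleTail_forcing_sub_le (hP : 0 ≤ P) (hfP : ∀ u, |f u| ≤ P) (hL : 0 ≤ L)
    (hfL : ∀ u v, |f u - f v| ≤ L * P * |u - v|) (hH : Summable fun t => |a t| * P + |b t|)
    (hs : Summable fun s => |1 / r s| * tailSum (fun t => |a t| * P + |b t|) s)
    {x y : ℕ → ℝ} {δ : ℝ} (hxy : ∀ i, |x i - y i| ≤ δ) (m : ℕ) :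
    |doubleTail r (forcing a b f σ x) m - doubleTail r (forcing a b f σ y) m| ≤
      L * δ * tailSum (fun s => |1 / r s| * tailSum (fun t => |a t| * P + |b t|) s) m := by
  rw [← doubleTail_sub (summable_forcing hfP hH x) (summable_forcing hfP hH y)
    (summable_inv_mul_tailSum_forcing hfP hH hs x) (summable_inv_mul_tailSum_forcing hfP hH hs y)]
  exact abs_doubleTail_le hH hs (abs_forcing_sub_le hP hL hfL hxy) m

lemma exists_bounded_solvesAt_of_ge (hr : ∀ n, r n ≠ 0) (hτ : 0 < τ) (hq : ∀ n, |q n| ≤ 1)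
    (hP : 0 ≤ P) (hfP : ∀ u, |f u| ≤ P) (hL : 0 ≤ L)
    (hfL : ∀ u v, |f u - f v| ≤ L * P * |u - v|)
    (hH : Summable fun t => |a t| * P + |b t|)
    (hs : Summable fun s => |1 / r s| * tailSum (fun t => |a t| * P + |b t|) s)
    (hW : Summable (tailSum fun s => |1 / r s| * tailSum (fun t => |a t| * P + |b t|) s)) :
    ∃ x N, τ ≤ N ∧ (∀ i, |x i| ≤ 1) ∧ ∀ k ≥ N, SolvesAt r a b q f τ σ x k := by
  set W := tailSum fun s => |1 / r s| * tailSum (fun t => |a t| * P + |b t|) s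
  have hW0 : ∀ m, 0 ≤ W m := fun m =>
    tsum_nonneg fun s => mul_nonneg (abs_nonneg _) (tsum_nonneg fun t => by positivity)
  obtain ⟨N, hτN, hW1, hWL⟩ : ∃ N, τ ≤ N ∧ tailSum W N ≤ 1 ∧ L * tailSum W N ≤ 1 / 2 := by
    have h1 := (tendsto_tailSum W).eventually (ge_mem_nhds one_pos)
    have h2 := ((tendsto_tailSum W).const_mul L).eventually
      (ge_mem_nhds (by norm_num : L * 0 < 1 / 2))
    exact ((eventually_ge_atTop τ).and (h1.and h2)).exists
  let Φ : (ℕ → ℝ) → ℕ → ℝ := fun x => neutralInv q (doubleTail r (forcing a b f σ x)) τ N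
  have hΦ : ∀ x n, |Φ x n| ≤ 1 := fun x n =>
    (abs_neutralInv_le hq hW hW0 (fun m _ => (abs_doubleTail_le hH hs
      (fun t => (abs_forcing_le hfP x t).trans_eq (one_mul _).symm) m).trans_eq (one_mul _))
      n).trans hW1
  have hcontr : ∀ x y δ, (∀ i, |x i - y i| ≤ δ) → ∀ n,
      |Φ x n - Φ y n| ≤ (2⁻¹ : NNReal) * δ := by
    intro x y δ hxy n
    have hδ : 0 ≤ δ := (abs_nonneg _).trans (hxy 0)
    rw [← neutralInv_sub]
    calc _ ≤ tailSum (fun m => L * δ * W m) N :=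
          abs_neutralInv_le hq (hW.mul_left _) (fun m => by have := hW0 m; positivity)
            (fun m _ => abs_doubleTail_forcing_sub_le hP hfP hL hfL hH hs hxy m) n
      _ = L * δ * tailSum W N := tsum_mul_left
      _ ≤ (2⁻¹ : NNReal) * δ := by push_cast; nlinarith
  obtain ⟨x, hx⟩ := exists_fixedPoint_of_abs_le (by norm_num) hΦ hcontr
  have hxΦ : ∀ m, neutralInv q (doubleTail r (forcing a b f σ x)) τ N m = x m := congrFun hx
  refine ⟨x, N, hτN, fun i => hxΦ i ▸ hΦ x i, fun k hk => ?_⟩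
  have hz : ∀ m ≥ N, neutralSum q τ x m = doubleTail r (forcing a b f σ x) m := fun m hm => by
    rw [neutralSum, ← hxΦ m, ← hxΦ (m - τ)]
    exact neutralInv_add hτ hτN hm
  rw [SolvesAt, hz k hk, hz (k + 1) (by omega), hz (k + 2) (by omega)]
  exact doubleTail_solves hr (summable_forcing hfP hH x)
    (summable_inv_mul_tailSum_forcing hfP hH hs x) k

lemma solvesAt_congr (hστ : σ < τ) {x y : ℕ → ℝ} {k : ℕ} (h : ∀ i ≥ k - τ, x i = y i) :
    SolvesAt r a b q f τ σ x k ↔ SolvesAt r a b q f τ σ y k := by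
  simp only [SolvesAt, neutralSum, forcing, h k (by omega), h (k + 1) (by omega),
    h (k + 2) (by omega), h (k - τ) le_rfl, h (k + 1 - τ) (by omega), h (k + 2 - τ) (by omega),
    h (k - σ) (by omega)]

lemma exists_update_solvesAt {x : ℕ → ℝ} {n : ℕ} (hr : r n ≠ 0) (hq : q n ≠ 0) (hστ : σ < τ)
    (hn : τ ≤ n) (hx : ∀ k > n, SolvesAt r a b q f τ σ x k) :
    ∃ v, ∀ k ≥ n, SolvesAt r a b q f τ σ (Function.update x (n - τ) v) k := by
  refine ⟨(forcing a b f σ x n - r (n + 1) * (neutralSum q τ x (n + 2) - neutralSum q τ x (n + 1))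
      + r n * (neutralSum q τ x (n + 1) - x n)) / (r n * q n), fun k hk => ?_⟩
  rcases hk.eq_or_lt with rfl | hk
  · simp only [SolvesAt, neutralSum, forcing, Function.update_self,
      Function.update_of_ne (show n + 2 ≠ n - τ by omega),
      Function.update_of_ne (show n + 2 - τ ≠ n - τ by omega),
      Function.update_of_ne (show n + 1 ≠ n - τ by omega),
      Function.update_of_ne (show n + 1 - τ ≠ n - τ by omega),
      Function.update_of_ne (show n ≠ n - τ by omega),
      Function.update_of_ne (show n - σ ≠ n - τ by omega)]
    field_simp
    ring
  · exact (solvesAt_congr hστ fun i hi => Function.update_of_ne (by omega) _ _).2 (hx k hk)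

lemma exists_solvesAt_of_ge_add (hr : ∀ n, r n ≠ 0) (hq : ∀ n, q n ≠ 0) (hστ : σ < τ)
    (j : ℕ) {x : ℕ → ℝ} (hx : ∀ k ≥ τ + j, SolvesAt r a b q f τ σ x k) :
    ∃ y, (∀ k ≥ τ, SolvesAt r a b q f τ σ y k) ∧ ∀ i ≥ j, y i = x i := by
  induction j generalizing x with
  | zero => exact ⟨x, hx, fun _ _ => rfl⟩
  | succ j ih =>
    obtain ⟨v, hv⟩ := exists_update_solvesAt (hr (τ + j)) (hq (τ + j)) hστ (Nat.le_add_right τ j)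
      fun k hk => hx k (by omega)
    rw [Nat.add_sub_cancel_left] at hv
    obtain ⟨y, hy, hyx⟩ := ih hv
    exact ⟨y, hy, fun i hi => (hyx i (by omega)).trans (Function.update_of_ne (by omega) _ _)⟩

end Equation

theorem stmt_10_general (r a b q : ℕ → ℝ) (τ σ : ℕ) (f : ℝ → ℝ) (P C : ℝ) (w : ℕ → ℝ)
    (hr : ∀ n, r n ≠ 0) (hτσ : σ < τ)
    (hf : LocallyLipschitz f) (hfP : ∀ u : ℝ, |f u| ≤ P)
    (hC : C ∈ Set.Ioo (0 : ℝ) 1)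
    (hw01 : ∀ k, w k ∈ Set.Ioo (0 : ℝ) 1)
    (ha : Summable fun t => |a t|) (hb : Summable fun t => |b t|)
    (hs : Summable fun s => |1 / r s| * ∑' t : ℕ, (|a (s + t)| * P + |b (s + t)|))
    (hO : ∃ D > (0 : ℝ), ∃ k₀ : ℕ, ∀ k ≥ k₀,
      ∑' s : ℕ, |1 / r (k + s)| * ∑' t : ℕ, (|a (k + s + t)| * P + |b (k + s + t)|) ≤
        D * (1 - w k) * (C * w k) ^ k)
    (hq : ∀ n, q n ∈ Set.Ioo (0 : ℝ) 1) :
    ∃ x : ℕ → ℝ, (∃ M : ℝ, ∀ n ≥ τ, |x n| ≤ M) ∧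
      ∀ n ≥ τ,
        (r (n + 1) *
            ((x (n + 2) + q (n + 2) * x (n + 2 - τ)) -
              (x (n + 1) + q (n + 1) * x (n + 1 - τ))) -
          r n *
            ((x (n + 1) + q (n + 1) * x (n + 1 - τ)) -
              (x n + q n * x (n - τ)))) =
          a n * f (x (n - σ)) + b n := by
  have hP : 0 ≤ P := (abs_nonneg _).trans (hfP 0)
  have h11 : (-1 : ℝ) ≤ 1 := by norm_num
  obtain ⟨K, hK⟩ := hf.exists_lipschitzWith_IccExtend h11
  set g := Set.IccExtend h11 ((Set.Icc (-1) 1).domRestrict f)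
  have hgP : ∀ u, |g u| ≤ P := fun u => hfP _
  obtain ⟨L, hL, hgL⟩ := hK.exists_abs_sub_le_mul_bound hgP
  obtain ⟨D, hD, k₀, hk₀⟩ := hO
  have hW := summable_of_le_mul_pow hC hw01 hD.le (fun k => tsum_nonneg fun s =>
    mul_nonneg (abs_nonneg _) (tsum_nonneg fun t => by positivity)) hk₀
  obtain ⟨x, N, hτN, hx1, hx⟩ := exists_bounded_solvesAt_of_ge (σ := σ) hr (Nat.zero_lt_of_lt hτσ)
    (fun n => abs_le.mpr ⟨by linarith [(hq n).1], (hq n).2.le⟩) hP hgP hL hgL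
    ((ha.mul_right P).add hb) hs hW
  have hfx : ∀ k ≥ N, SolvesAt r a b q f τ σ x k := fun k hk => by
    simpa only [SolvesAt, forcing, g, Set.IccExtend_of_mem h11 _ (abs_le.mp (hx1 _)),
      Set.domRestrict_apply] using hx k hk
  obtain ⟨y, hy, hyx⟩ := exists_solvesAt_of_ge_add hr (fun n => (hq n).1.ne') hτσ (N - τ) (x := x)
    (by rwa [Nat.add_sub_cancel' hτN])
  obtain ⟨M, hM⟩ := exists_forall_abs_le_of_ge fun n hn => (hyx n hn).symm ▸ hx1 n
  exact ⟨y, ⟨M, fun n _ => hM n⟩, hy⟩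

/-- Existence of a bounded full solution when `q n ∈ (0,1)` tends to `1`,
via the approximation hypothesis `(H_sb)`: tails of the double series are
`O((1 - w k)(C w k)^k)` for an increasing sequence `(w k) ⊂ (0,1)` with
`∑ (1 - w k) < ∞`, `f` locally Lipschitz and bounded by `P`. -/
theorem stmt_10 (r a b q : ℕ → ℝ) (τ σ : ℕ) (f : ℝ → ℝ) (P C : ℝ) (w : ℕ → ℝ)
    (hr : ∀ n, r n ≠ 0) (hτσ : σ < τ)
    (hf : LocallyLipschitz f) (hfP : ∀ u : ℝ, |f u| ≤ P)
    (hC : C ∈ Set.Ioo (0 : ℝ) 1)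
    (hw : StrictMono w) (hw01 : ∀ k, w k ∈ Set.Ioo (0 : ℝ) 1)
    (hwsum : Summable fun k => 1 - w k)
    (ha : Summable fun t => |a t|) (hb : Summable fun t => |b t|)
    (hs : Summable fun s => |1 / r s| * ∑' t : ℕ, (|a (s + t)| * P + |b (s + t)|))
    (hO : ∃ D > (0 : ℝ), ∃ k₀ : ℕ, ∀ k ≥ k₀,
      ∑' s : ℕ, |1 / r (k + s)| * ∑' t : ℕ, (|a (k + s + t)| * P + |b (k + s + t)|) ≤
        D * (1 - w k) * (C * w k) ^ k)
    (hq : ∀ n, q n ∈ Set.Ioo (0 : ℝ) 1)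
    (hq1 : Tendsto q atTop (nhds 1))
    (hqinf : ∃ c > (0 : ℝ), ∀ n, c ≤ q n) :
    ∃ x : ℕ → ℝ, (∃ M : ℝ, ∀ n ≥ τ, |x n| ≤ M) ∧
      ∀ n ≥ τ,
        (r (n + 1) *
            ((x (n + 2) + q (n + 2) * x (n + 2 - τ)) -
              (x (n + 1) + q (n + 1) * x (n + 1 - τ))) -
          r n *
            ((x (n + 1) + q (n + 1) * x (n + 1 - τ)) -
              (x n + q n * x (n - τ)))) =
          a n * f (x (n - σ)) + b n :=
  stmt_10_general r a b q τ σ f P C w hr hτσ hf hfP hC hw01 ha hb hs hO hq
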